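/- If the witness value satisfies |W| = |tr(M(ρ − Γ(ρ)))| for some 0 ⪯ M ⪯ I and density matrix ρ on ℂ^d, then d ≥ 1/(1 − |W|) whenever |W| < 1; i.e., a large witness value certifies a lower bound on the Hilbert space dimension. -/

import Mathlib

open Matrix BigOperators
open scoped Kronecker Matrix.Norms.L2Operator ComplexOrder

/-- Complete dephasing (classicalisation) map in the standard basis of `ℂ^d`. -/
noncomputable def dephase {d : ℕ} (ρ : Matrix (Fin d) (Fin d) ℂ) : Matrix (Fin d) (Fin d) ℂ :=
  Matrix.of fun i j => if i = j then ρ i j else 0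

/-- Trace norm: sum of singular values, i.e. `tr √(AᴴA)`. -/
noncomputable def traceNorm {n : Type} [Fintype n] [DecidableEq n] (A : Matrix n n ℂ) : ℝ :=
  (((Matrix.posSemidef_conjTranspose_mul_self A).1.eigenvectorUnitary.1 *
      Matrix.diagonal (((↑) : ℝ → ℂ) ∘ (√·) ∘ (Matrix.posSemidef_conjTranspose_mul_self A).1.eigenvalues) *
      (star (Matrix.posSemidef_conjTranspose_mul_self A).1.eigenvectorUnitary :
        Matrix n n ℂ)).trace).re

/-- Dephasing on the first (system) factor of a bipartite space. -/
noncomputable def dephaseS {d m : ℕ} (ρ : Matrix (Fin d × Fin m) (Fin d × Fin m) ℂ) :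
    Matrix (Fin d × Fin m) (Fin d × Fin m) ℂ :=
  Matrix.of fun p q => if p.1 = q.1 then ρ p q else 0

lemma diag_re_nonneg {d : ℕ} {A : Matrix (Fin d) (Fin d) ℂ} (hA : A.PosSemidef) (i : Fin d) :
    0 ≤ (A i i).re := by
  have h := hA.dotProduct_mulVec_nonneg (Pi.single i 1)
  rw [Matrix.mulVec_single, ← Pi.single_star, star_one] at h
  simpa [single_dotProduct, Complex.le_def] using h.1

lemma diag_im_zero {d : ℕ} {A : Matrix (Fin d) (Fin d) ℂ} (hA : A.PosSemidef) (i : Fin d) :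
    (A i i).im = 0 :=
  Complex.conj_eq_iff_im.mp (hA.1.apply i i)

lemma trace_mul_re_nonneg {d : ℕ} {A B : Matrix (Fin d) (Fin d) ℂ}
    (hA : A.PosSemidef) (hB : B.PosSemidef) : 0 ≤ ((A * B).trace).re := by
  obtain ⟨C, rfl⟩ : ∃ C : Matrix (Fin d) (Fin d) ℂ, B = Cᴴ * C := by
    open scoped MatrixOrder in exact CStarAlgebra.nonneg_iff_eq_star_mul_self.mp hB.nonneg
  have h1 : (A * (Cᴴ * C)).trace = (C * A * Cᴴ).trace := by
    rw [← Matrix.mul_assoc, Matrix.trace_mul_cycle]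
  rw [h1]
  have hP : (C * A * Cᴴ).PosSemidef := hA.mul_mul_conjTranspose_same C
  rw [Matrix.trace, Complex.re_sum]
  exact Finset.sum_nonneg fun i _ => diag_re_nonneg hP i

lemma entry_abs_sq_le {d : ℕ} {A : Matrix (Fin d) (Fin d) ℂ} (hA : A.PosSemidef) (i j : Fin d) :
    (‖A i j‖)^2 ≤ (A i i).re * (A j j).re := by
  rw [Complex.sq_norm]
  by_cases hz0 : A i j = 0
  · rw [hz0]; simpa using mul_nonneg (diag_re_nonneg hA i) (diag_re_nonneg hA j)
  have hji : A j i = starRingEnd ℂ (A i j) := by rw [← hA.1.apply i j]; simp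
  have h2 : starRingEnd ℂ (A i j) * (A i j) = (Complex.normSq (A i j) : ℂ) := by
    rw [mul_comm, Complex.mul_conj]
  have hq : ∀ s : ℝ, 0 ≤ ((A i i).re * Complex.normSq (A i j)) * (s * s)
      + (2 * Complex.normSq (A i j)) * s + (A j j).re := by
    intro s
    have h := (hA.dotProduct_mulVec_nonneg (Pi.single i (A i j * s) + Pi.single j 1)).1
    rw [Matrix.mulVec_add, Matrix.mulVec_single, Matrix.mulVec_single, star_add,
        ← Pi.single_star, ← Pi.single_star, star_one] at h
    rw [add_dotProduct, dotProduct_add, dotProduct_add,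
        single_dotProduct, single_dotProduct, single_dotProduct,
        single_dotProduct] at h
    simp only [Pi.smul_apply, Matrix.col_apply, MulOpposite.smul_eq_mul_unop,
        MulOpposite.unop_op, mul_one, one_mul, Complex.star_def, _root_.map_mul, Complex.conj_ofReal, hji] at h
    have key : starRingEnd ℂ (A i j) * ↑s * (A i i * (A i j * ↑s))
        + starRingEnd ℂ (A i j) * ↑s * (A i j)
        + (starRingEnd ℂ (A i j) * (A i j * ↑s) + A j j)
        = A i i * ((Complex.normSq (A i j) * (s * s) : ℝ) : ℂ)
          + ((2 * Complex.normSq (A i j) * s : ℝ) : ℂ) + A j j := by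
      push_cast
      linear_combination (A i i * (s : ℂ) * s + 2 * (s : ℂ)) * h2
    rw [key] at h
    simp only [Complex.add_re, Complex.mul_re, Complex.ofReal_re, Complex.ofReal_im,
      mul_zero, sub_zero, Complex.zero_re] at h
    nlinarith [h]
  have hd := discrim_le_zero hq
  rw [discrim] at hd
  have hpos : 0 < Complex.normSq (A i j) := Complex.normSq_pos.mpr hz0
  nlinarith [hd, hpos]

lemma trace_dephase_term {d : ℕ} (ρ M : Matrix (Fin d) (Fin d) ℂ) :
    (M * dephase ρ).trace = ∑ i, M i i * ρ i i := by
  simp only [Matrix.trace, Matrix.diag, Matrix.mul_apply, dephase, Matrix.of_apply,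
    mul_ite, mul_zero]
  exact Finset.sum_congr rfl fun i _ => by simp

lemma witness_re_le {d : ℕ} (hd : 0 < d)
    (ρ M : Matrix (Fin d) (Fin d) ℂ)
    (hρ : ρ.PosSemidef) (htr : ρ.trace = 1)
    (hM0 : M.PosSemidef) (hM1 : (1 - M).PosSemidef) :
    ((M * (ρ - dephase ρ)).trace).re ≤ 1 - 1/(d:ℝ) := by
  set m : Fin d → ℝ := fun i => (M i i).re with hm
  set r : Fin d → ℝ := fun i => (ρ i i).re with hr
  have hm0 : ∀ i, 0 ≤ m i := fun i => diag_re_nonneg hM0 i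
  have hr0 : ∀ i, 0 ≤ r i := fun i => diag_re_nonneg hρ i
  set b : Fin d → ℝ := fun i => Real.sqrt (m i * r i) with hb
  have hb0 : ∀ i, 0 ≤ b i := fun i => Real.sqrt_nonneg _
  have hb2 : ∀ i, b i ^ 2 = m i * r i := fun i =>
    Real.sq_sqrt (mul_nonneg (hm0 i) (hr0 i))
  set s : ℝ := ∑ i, m i * r i with hs
  have hs0 : 0 ≤ s := Finset.sum_nonneg fun i _ => mul_nonneg (hm0 i) (hr0 i)
  -- the dephased term
  have T2re : ((M * dephase ρ).trace).re = s := by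
    rw [trace_dephase_term, Complex.re_sum, hs]
    exact Finset.sum_congr rfl fun i _ => by
      rw [Complex.mul_re, diag_im_zero hM0 i, zero_mul, sub_zero]
  -- step 1 : trace(Mρ).re ≤ (∑ b)²
  have step1 : ((M * ρ).trace).re ≤ (∑ i, b i)^2 := by
    have e : ((M * ρ).trace).re = ∑ i, ∑ j, (M i j * ρ j i).re := by
      rw [Matrix.trace, Complex.re_sum]
      exact Finset.sum_congr rfl fun i _ => by
        rw [Matrix.diag, Matrix.mul_apply, Complex.re_sum]
    have e2 : (∑ i, b i)^2 = ∑ i, ∑ j, b i * b j := by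
      rw [sq, Finset.sum_mul_sum]
    rw [e, e2]
    refine Finset.sum_le_sum fun i _ => Finset.sum_le_sum fun j _ => ?_
    have h1 : (M i j * ρ j i).re ≤ ‖M i j‖ * ‖ρ j i‖ := by
      refine (Complex.re_le_norm _).trans ?_
      rw [norm_mul]
    have h2 : (‖M i j‖ * ‖ρ j i‖)^2 ≤ (b i * b j)^2 := by
      have hM := entry_abs_sq_le hM0 i j
      have hρ' := entry_abs_sq_le hρ j i
      have e3 : (b i * b j)^2 = (m i * r i) * (m j * r j) := by
        rw [mul_pow, hb2, hb2]
      rw [mul_pow, e3]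
      nlinarith [norm_nonneg (M i j), norm_nonneg (ρ j i), hm0 i, hm0 j,
        hr0 i, hr0 j, sq_nonneg (‖M i j‖), sq_nonneg (‖ρ j i‖)]
    have h3 : ‖M i j‖ * ‖ρ j i‖ ≤ b i * b j := by
      have hn1 : 0 ≤ ‖M i j‖ * ‖ρ j i‖ :=
        mul_nonneg (norm_nonneg _) (norm_nonneg _)
      have hn2 : 0 ≤ b i * b j := mul_nonneg (hb0 i) (hb0 j)
      exact (pow_le_pow_iff_left₀ hn1 hn2 two_ne_zero).mp h2
    exact h1.trans h3
  -- step 2 : trace(Mρ).re ≤ 1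
  have step2 : ((M * ρ).trace).re ≤ 1 := by
    have e : (M * ρ).trace = ρ.trace - ((1 - M) * ρ).trace := by
      rw [Matrix.sub_mul, Matrix.one_mul, Matrix.trace_sub]; ring
    rw [e, htr, Complex.sub_re, Complex.one_re]
    linarith [trace_mul_re_nonneg hM1 hρ]
  -- Cauchy-Schwarz
  have CS : (∑ i, b i)^2 ≤ (d:ℝ) * s := by
    have := sq_sum_le_card_mul_sum_sq (s := Finset.univ) (f := b)
    simpa [hb2, hs] using this
  -- putting it together
  have egoal : ((M * (ρ - dephase ρ)).trace).re = ((M * ρ).trace).re - s := by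
    rw [Matrix.mul_sub, Matrix.trace_sub, Complex.sub_re, T2re]
  rw [egoal]
  have hd1 : (1:ℝ) ≤ d := by exact_mod_cast hd
  have hdpos : (0:ℝ) < d := by positivity
  have hdinv : (d:ℝ) * (1/d) = 1 := by field_simp
  rcases le_or_gt s (1/(d:ℝ)) with hcase | hcase
  · have hTds : ((M * ρ).trace).re ≤ (d:ℝ) * s := step1.trans CS
    nlinarith [mul_nonneg (sub_nonneg.mpr hd1) (sub_nonneg.mpr hcase)]
  · linarith


lemma dephase_isHermitian {d : ℕ} {ρ : Matrix (Fin d) (Fin d) ℂ} (hρ : ρ.IsHermitian) :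
    (dephase ρ).IsHermitian := by
  ext i j
  simp only [Matrix.conjTranspose_apply, dephase, Matrix.of_apply]
  rcases eq_or_ne i j with rfl | hij
  · simpa using hρ.apply i i
  · simp [hij, Ne.symm hij]

lemma trace_dephase {d : ℕ} (ρ : Matrix (Fin d) (Fin d) ℂ) :
    (dephase ρ).trace = ρ.trace := by
  simp [Matrix.trace, Matrix.diag, dephase]

theorem witness_certifies_dimension {d : ℕ} (hd : 0 < d)
    (ρ M : Matrix (Fin d) (Fin d) ℂ)
    (hρ : ρ.PosSemidef) (htr : ρ.trace = 1)
    (hM0 : M.PosSemidef) (hM1 : (1 - M).PosSemidef)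
    (hW : ‖(M * (ρ - dephase ρ)).trace‖ < 1) :
    (d : ℝ) ≥ 1 / (1 - ‖(M * (ρ - dephase ρ)).trace‖) := by
  set W := (M * (ρ - dephase ρ)).trace with hWdef
  -- W is real
  have hΔ : (ρ - dephase ρ).IsHermitian := hρ.1.sub (dephase_isHermitian hρ.1)
  have hstar : star W = W := by
    rw [hWdef, ← Matrix.trace_conjTranspose, Matrix.conjTranspose_mul, hΔ.eq, hM0.1.eq,
      Matrix.trace_mul_comm]
  have him : W.im = 0 := Complex.conj_eq_iff_im.mp hstar
  have habs : ‖W‖ = |W.re| := by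
    have : W = (W.re : ℂ) := Complex.ext rfl (by simp [him])
    rw [this, Complex.norm_real, Complex.ofReal_re, Real.norm_eq_abs]
  -- upper bound on W.re
  have h1 : W.re ≤ 1 - 1/(d:ℝ) := witness_re_le hd ρ M hρ htr hM0 hM1
  -- lower bound via 1 - M
  have h2 : -(1 - 1/(d:ℝ)) ≤ W.re := by
    have hM1' : (1 - (1 - M)).PosSemidef := by simpa using hM0
    have h3 := witness_re_le hd ρ (1 - M) hρ htr hM1 hM1'
    have e : ((1 - M) * (ρ - dephase ρ)).trace = -W := by
      rw [Matrix.sub_mul, Matrix.one_mul, Matrix.trace_sub, hWdef, Matrix.trace_sub,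
        trace_dephase]
      ring
    rw [e] at h3
    simp only [Complex.neg_re] at h3
    linarith
  have habs2 : ‖W‖ ≤ 1 - 1/(d:ℝ) := by
    rw [habs]
    exact abs_le.mpr ⟨h2, h1⟩
  have hdpos : (0:ℝ) < d := by exact_mod_cast hd
  have hpos : 0 < 1 - ‖W‖ := by linarith
  rw [ge_iff_le, div_le_iff₀ hpos]
  have hdinv : (d:ℝ) * (1/d) = 1 := by field_simp
  nlinarith [habs2, hdpos]
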